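/- arXiv:math-ph/0410019 — 3 statements merged into one kernel-verified Lean document; each statement's English description precedes it below -/
import Mathlib

section
/- Let D be a positive integer and l > 0, q ≥ 0 real numbers. There exist constants C > 0 and c > 0 such that for all T with 0 < T ≤ 1, one has ∑_{k∈(ℕ₊)^D} ( −log(1 − e^{−(1/T)·√((π²/l²)|k|² + q)}) ) ≤ C · e^{−c/T}. -/
open Real Filter Topology

set_option maxHeartbeats 1000000

lemma geom_pnat {r : ℝ} (h0 : 0 ≤ r) (h1 : r < 1) :
    Summable (fun n : ℕ+ => r ^ (n : ℕ)) ∧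
    (∑' n : ℕ+, r ^ (n : ℕ)) = r * (1 - r)⁻¹ := by
  have he : ∀ m : ℕ, (fun n : ℕ+ => r ^ (n : ℕ)) (Equiv.pnatEquivNat.symm m)
      = r * r ^ m := by
    intro m
    simp [Equiv.pnatEquivNat, Nat.succPNat, pow_succ, mul_comm]
  have hg : Summable (fun m : ℕ => r * r ^ m) :=
    (summable_geometric_of_lt_one h0 h1).mul_left r
  have hs : Summable (fun n : ℕ+ => r ^ (n : ℕ)) :=
    (Equiv.pnatEquivNat.symm.summable_iff).mp (hg.congr fun m => (he m).symm)
  refine ⟨hs, ?_⟩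
  rw [← Equiv.pnatEquivNat.symm.tsum_eq]
  calc (∑' m : ℕ, (fun n : ℕ+ => r ^ (n : ℕ)) (Equiv.pnatEquivNat.symm m))
      = ∑' m : ℕ, r * r ^ m := by exact tsum_congr he
    _ = r * (1 - r)⁻¹ := by rw [tsum_mul_left, tsum_geometric_of_lt_one h0 h1]

lemma pi_geom (D : ℕ) {r : ℝ} (h0 : 0 ≤ r) (h1 : r < 1) :
    Summable (fun k : Fin D → ℕ+ => ∏ i, r ^ ((k i : ℕ))) ∧
    (∑' k : Fin D → ℕ+, ∏ i, r ^ ((k i : ℕ))) ≤ (r * (1 - r)⁻¹) ^ D := by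
  obtain ⟨hs, hts⟩ := geom_pnat h0 h1
  have hnn : ∀ k : Fin D → ℕ+, 0 ≤ ∏ i, r ^ ((k i : ℕ)) :=
    fun k => Finset.prod_nonneg fun i _ => pow_nonneg h0 _
  have key : ∀ u : Finset (Fin D → ℕ+),
      ∑ k ∈ u, ∏ i, r ^ ((k i : ℕ)) ≤ (r * (1 - r)⁻¹) ^ D := by
    intro u
    set M : ℕ+ := u.sup (fun k => Finset.univ.sup fun i => k i) with hM
    have hsub : u ⊆ Fintype.piFinset (fun _ : Fin D => Finset.Icc 1 M) := by
      intro k hk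
      rw [Fintype.mem_piFinset]
      intro i
      rw [Finset.mem_Icc]
      refine ⟨(k i).one_le, le_trans ?_ (Finset.le_sup hk)⟩
      exact Finset.le_sup (Finset.mem_univ i)
    calc ∑ k ∈ u, ∏ i, r ^ ((k i : ℕ))
        ≤ ∑ k ∈ Fintype.piFinset (fun _ : Fin D => Finset.Icc 1 M),
            ∏ i, r ^ ((k i : ℕ)) :=
          Finset.sum_le_sum_of_subset_of_nonneg hsub fun k _ _ => hnn k
      _ = ∏ _i : Fin D, ∑ n ∈ Finset.Icc (1 : ℕ+) M, r ^ ((n : ℕ)) :=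
          (Finset.prod_univ_sum (fun _ : Fin D => Finset.Icc (1 : ℕ+) M)
            (fun _ n => r ^ ((n : ℕ)))).symm
      _ ≤ ∏ _i : Fin D, (r * (1 - r)⁻¹) := by
          refine Finset.prod_le_prod (fun i _ => Finset.sum_nonneg fun n _ =>
            pow_nonneg h0 _) (fun i _ => ?_)
          rw [← hts]
          exact Summable.sum_le_tsum _ (fun n _ => pow_nonneg h0 _) hs
      _ = (r * (1 - r)⁻¹) ^ D := by simp
  exact ⟨summable_of_sum_le hnn key, Summable.tsum_le_of_sum_le (summable_of_sum_le hnn key) key⟩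

/-- Exponential vanishing at low temperature of the Bose–Einstein sum on the box:
there are `C, c > 0` such that for all `0 < T ≤ 1`,
`∑_{k∈(ℕ₊)^D} (-log(1 - e^{-(1/T)√((π²/l²)|k|² + q)})) ≤ C e^{-c/T}`. -/
theorem stmt_16 (D : ℕ) (hD : 0 < D) (l q : ℝ) (hl : 0 < l) (hq : 0 ≤ q) :
    ∃ C > (0 : ℝ), ∃ c > (0 : ℝ), ∀ T : ℝ, 0 < T → T ≤ 1 →
      (∑' k : Fin D → ℕ+,
        -Real.log (1 - Real.exp (-(1 / T) *
          Real.sqrt (π ^ 2 / l ^ 2 * ∑ i, ((k i : ℕ) : ℝ) ^ 2 + q)))) ≤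
        C * Real.exp (-c / T) := by
  have hπ : (0 : ℝ) < π := Real.pi_pos
  have hD1 : (1 : ℝ) ≤ (D : ℝ) := by exact_mod_cast hD
  have hDpos : (0 : ℝ) < (D : ℝ) := by linarith
  set b : ℝ := π / (l * D) with hb
  have hbpos : 0 < b := div_pos hπ (by positivity)
  have hexpb : Real.exp (-b) < 1 := Real.exp_lt_one_iff.mpr (by linarith)
  set K : ℝ := (1 - Real.exp (-b))⁻¹ with hK
  have hKpos : 0 < K := inv_pos.mpr (by linarith)
  refine ⟨K ^ (D + 1), by positivity, b, hbpos, ?_⟩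
  intro T hT0 hT1
  set r : ℝ := Real.exp (-(b / T)) with hr
  have hr0 : 0 < r := Real.exp_pos _
  have hbT : b ≤ b / T := by
    rw [le_div_iff₀ hT0]
    nlinarith
  have hr1 : r ≤ Real.exp (-b) := Real.exp_le_exp.mpr (by linarith)
  have hrlt1 : r < 1 := lt_of_le_of_lt hr1 hexpb
  obtain ⟨hsum, hbound⟩ := pi_geom D hr0.le hrlt1
  -- pointwise estimate
  have hpoint : ∀ k : Fin D → ℕ+,
      -Real.log (1 - Real.exp (-(1 / T) *
          Real.sqrt (π ^ 2 / l ^ 2 * ∑ i, ((k i : ℕ) : ℝ) ^ 2 + q)))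
        ≤ K * ∏ i, r ^ ((k i : ℕ)) := by
    intro k
    set S : ℝ := ∑ i, ((k i : ℕ) : ℝ) ^ 2 with hS
    set s : ℝ := ∑ i, ((k i : ℕ) : ℝ) with hs
    have hS0 : 0 ≤ S := Finset.sum_nonneg fun i _ => sq_nonneg _
    have hsD : (D : ℝ) ≤ s := by
      have : ∀ i ∈ Finset.univ, (1 : ℝ) ≤ ((k i : ℕ) : ℝ) := by
        intro i _
        exact_mod_cast (k i).one_le
      calc (D : ℝ) = ∑ _i : Fin D, (1 : ℝ) := by simp
        _ ≤ s := Finset.sum_le_sum this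
    have hs0 : 0 ≤ s := by linarith
    have hcs : s ^ 2 ≤ (D : ℝ) * S := by
      have := sq_sum_le_card_mul_sum_sq
        (s := (Finset.univ : Finset (Fin D))) (f := fun i => ((k i : ℕ) : ℝ))
      simpa using this
    set E : ℝ := Real.sqrt (π ^ 2 / l ^ 2 * S + q) with hE
    have hEbs : b * s ≤ E := by
      apply Real.le_sqrt_of_sq_le
      have h1 : (b * s) ^ 2 = π ^ 2 * s ^ 2 / (l ^ 2 * (D:ℝ) ^ 2) := by
        rw [hb]; field_simp
      have h2 : π ^ 2 * s ^ 2 / (l ^ 2 * (D:ℝ) ^ 2) ≤ π ^ 2 * S / l ^ 2 := by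
        rw [div_le_div_iff₀ (by positivity) (by positivity)]
        have hDD : (D : ℝ) ≤ (D : ℝ) ^ 2 := by nlinarith
        have ha : π ^ 2 * l ^ 2 * s ^ 2 ≤ π ^ 2 * l ^ 2 * ((D : ℝ) * S) :=
          mul_le_mul_of_nonneg_left hcs (by positivity)
        have hb2 : (D : ℝ) * (S * (π ^ 2 * l ^ 2)) ≤ (D : ℝ) ^ 2 * (S * (π ^ 2 * l ^ 2)) :=
          mul_le_mul_of_nonneg_right hDD (by positivity)
        nlinarith [ha, hb2]
      have h3 : π ^ 2 * S / l ^ 2 ≤ π ^ 2 / l ^ 2 * S + q := by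
        rw [div_mul_eq_mul_div] at *
        linarith
      linarith [h1.le, h1.ge, h2, h3]
    have hEpos : 0 < E := lt_of_lt_of_le (by nlinarith) hEbs
    set x : ℝ := Real.exp (-(1 / T) * E) with hx
    have hx0 : 0 < x := Real.exp_pos _
    have hxr : x ≤ ∏ i, r ^ ((k i : ℕ)) := by
      have hexpand : (∏ i, r ^ ((k i : ℕ))) = Real.exp (-(b / T) * s) := by
        rw [hs, Finset.mul_sum, Real.exp_sum]
        refine Finset.prod_congr rfl fun i _ => ?_
        rw [hr, ← Real.exp_nat_mul]
        ring_nf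
      rw [hexpand, hx, Real.exp_le_exp]
      have : b * s / T ≤ E / T := by gcongr
      calc -(1 / T) * E = -(E / T) := by ring
        _ ≤ -(b * s / T) := by linarith
        _ = -(b / T) * s := by ring
    have hxeb : x ≤ Real.exp (-b) := by
      rw [hx, Real.exp_le_exp]
      have h1 : b * s / T ≤ E / T := by gcongr
      have h2 : b ≤ b * s / T := by
        rw [le_div_iff₀ hT0]
        nlinarith
      calc -(1 / T) * E = -(E / T) := by ring
        _ ≤ -b := by linarith
    have hx1 : x < 1 := lt_of_le_of_lt hxeb hexpb
    have h1x : 0 < 1 - x := by linarith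
    have hlog : -Real.log (1 - x) ≤ x * (1 - x)⁻¹ := by
      have := Real.log_le_sub_one_of_pos (inv_pos.mpr h1x)
      rw [Real.log_inv] at this
      have heq : (1 - x)⁻¹ - 1 = x * (1 - x)⁻¹ := by
        field_simp
        ring
      linarith [this, heq.le, heq.ge]
    have hinvK : (1 - x)⁻¹ ≤ K := by
      rw [hK]
      apply inv_anti₀ (by linarith)
      linarith
    calc -Real.log (1 - x) ≤ x * (1 - x)⁻¹ := hlog
      _ ≤ x * K := by
          apply mul_le_mul_of_nonneg_left hinvK hx0.le
      _ ≤ (∏ i, r ^ ((k i : ℕ))) * K := by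
          apply mul_le_mul_of_nonneg_right hxr hKpos.le
      _ = K * ∏ i, r ^ ((k i : ℕ)) := mul_comm _ _
  have hnn : ∀ k : Fin D → ℕ+,
      0 ≤ -Real.log (1 - Real.exp (-(1 / T) *
          Real.sqrt (π ^ 2 / l ^ 2 * ∑ i, ((k i : ℕ) : ℝ) ^ 2 + q))) := by
    intro k
    have hy1 : Real.exp (-(1 / T) *
        Real.sqrt (π ^ 2 / l ^ 2 * ∑ i, ((k i : ℕ) : ℝ) ^ 2 + q)) ≤ 1 := by
      have h1 := Real.sqrt_nonneg (π ^ 2 / l ^ 2 * ∑ i, ((k i : ℕ) : ℝ) ^ 2 + q)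
      have h2 : 0 < 1 / T := by positivity
      calc Real.exp (-(1 / T) *
          Real.sqrt (π ^ 2 / l ^ 2 * ∑ i, ((k i : ℕ) : ℝ) ^ 2 + q))
          ≤ Real.exp 0 := Real.exp_le_exp.mpr (by nlinarith)
        _ = 1 := Real.exp_zero
    have : Real.log (1 - Real.exp (-(1 / T) *
        Real.sqrt (π ^ 2 / l ^ 2 * ∑ i, ((k i : ℕ) : ℝ) ^ 2 + q))) ≤ 0 :=
      Real.log_nonpos (by linarith) (by
        nlinarith [Real.exp_pos (-(1 / T) *
          Real.sqrt (π ^ 2 / l ^ 2 * ∑ i, ((k i : ℕ) : ℝ) ^ 2 + q))])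
    linarith
  have hgsum : Summable (fun k : Fin D → ℕ+ => K * ∏ i, r ^ ((k i : ℕ))) :=
    hsum.mul_left K
  have hfsum : Summable (fun k : Fin D → ℕ+ =>
      -Real.log (1 - Real.exp (-(1 / T) *
          Real.sqrt (π ^ 2 / l ^ 2 * ∑ i, ((k i : ℕ) : ℝ) ^ 2 + q)))) :=
    Summable.of_nonneg_of_le hnn hpoint hgsum
  have hrD : r ^ D ≤ r := by
    calc r ^ D ≤ r ^ 1 := pow_le_pow_of_le_one hr0.le hrlt1.le hD
      _ = r := pow_one r
  have hfinal : K * (r * (1 - r)⁻¹) ^ D ≤ K ^ (D + 1) * Real.exp (-b / T) := by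
    have hinvrK : (1 - r)⁻¹ ≤ K := by
      rw [hK]
      apply inv_anti₀ (by linarith)
      linarith
    have h1 : (r * (1 - r)⁻¹) ^ D ≤ (r * K) ^ D := by
      apply pow_le_pow_left₀ (mul_nonneg hr0.le (inv_nonneg.mpr (by linarith)))
      exact mul_le_mul_of_nonneg_left hinvrK hr0.le
    have h2 : (r * K) ^ D = r ^ D * K ^ D := mul_pow _ _ _
    have h3 : r ^ D * K ^ D ≤ r * K ^ D :=
      mul_le_mul_of_nonneg_right hrD (by positivity)
    have hrE : Real.exp (-b / T) = r := by rw [hr, neg_div]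
    calc K * (r * (1 - r)⁻¹) ^ D ≤ K * (r ^ D * K ^ D) := by
          rw [← h2]; exact mul_le_mul_of_nonneg_left h1 hKpos.le
      _ ≤ K * (r * K ^ D) := mul_le_mul_of_nonneg_left h3 hKpos.le
      _ = K ^ (D + 1) * r := by ring
      _ = K ^ (D + 1) * Real.exp (-b / T) := by rw [hrE]
  calc (∑' k : Fin D → ℕ+,
        -Real.log (1 - Real.exp (-(1 / T) *
          Real.sqrt (π ^ 2 / l ^ 2 * ∑ i, ((k i : ℕ) : ℝ) ^ 2 + q))))
      ≤ ∑' k : Fin D → ℕ+, K * ∏ i, r ^ ((k i : ℕ)) :=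
        Summable.tsum_le_tsum hpoint hfsum hgsum
    _ = K * ∑' k : Fin D → ℕ+, ∏ i, r ^ ((k i : ℕ)) := tsum_mul_left
    _ ≤ K * (r * (1 - r)⁻¹) ^ D := mul_le_mul_of_nonneg_left hbound hKpos.le
    _ ≤ K ^ (D + 1) * Real.exp (-b / T) := hfinal
end

section
/- Let a, b, x, y be positive real numbers with x > a·b and y ≥ b. Then e^{(ab/(a+1))·y} · ( e^{(ab/(1+a))·x} − 1 ) < e^{x y} − 1. -/
/-! With `c = ab/(a+1)` the left side is `e^{c(x+y)} - e^{cy} ≤ e^{c(x+y)} - 1`, so it suffices that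
`c(x+y) < xy`, i.e. `1/x + 1/y < 1/c = 1/(ab) + 1/b`, which holds termwise since `x > ab` and `y ≥ b`. -/

open Real

theorem exp_mul_exp_sub_one_lt {u v s : ℝ} (hu : 0 ≤ u) (h : u + v < s) :
    exp u * (exp v - 1) < exp s - 1 := by
  have hsum : exp u * (exp v - 1) = exp (u + v) - exp u := by
    rw [exp_add]; ring
  rw [hsum]
  linarith [exp_lt_exp.mpr h, one_le_exp hu]

theorem mul_div_add_one_mul_add_lt_mul {a b x y : ℝ} (ha : 0 < a) (hb : 0 < b)
    (hxab : a * b < x) (hyb : b ≤ y) : a * b / (a + 1) * (x + y) < x * y := by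
  have hx : 0 < x := (mul_pos ha hb).trans hxab
  have hy : 0 < y := hb.trans_le hyb
  rw [div_mul_eq_mul_div, div_lt_iff₀ (by linarith)]
  nlinarith [mul_le_mul_of_nonneg_left hyb (mul_pos ha hx).le, mul_lt_mul_of_pos_right hxab hy]

theorem stmt_17_general (a b x y : ℝ) (ha : 0 < a) (hb : 0 < b)
    (hxab : x > a * b) (hyb : y ≥ b) :
    Real.exp (a * b / (a + 1) * y) * (Real.exp (a * b / (1 + a) * x) - 1) <
      Real.exp (x * y) - 1 := by
  rw [add_comm 1 a]
  apply exp_mul_exp_sub_one_lt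
  · have hy : 0 < y := hb.trans_le hyb
    positivity
  · rw [← mul_add, add_comm y x]
    exact mul_div_add_one_mul_add_lt_mul ha hb hxab hyb

/-- For positive reals `a, b, x, y` with `x > a b` and `y ≥ b`,
`e^{(ab/(a+1))y} (e^{(ab/(1+a))x} - 1) < e^{xy} - 1`. -/
theorem stmt_17 (a b x y : ℝ) (ha : 0 < a) (hb : 0 < b) (hx : 0 < x) (hy : 0 < y)
    (hxab : x > a * b) (hyb : y ≥ b) :
    Real.exp (a * b / (a + 1) * y) * (Real.exp (a * b / (1 + a) * x) - 1) <
      Real.exp (x * y) - 1 :=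
  stmt_17_general a b x y ha hb hxab hyb
end

section
/- Let D be a positive integer. For x > 0 define g_D(x) = ∑_{k∈ℤ^D, k≠0} |k| / (e^{|k|/x} − 1). Then g_D(x) is finite for every x > 0, the function g_D is strictly increasing on (0, ∞), g_D(x) → 0 as x → 0⁺, and g_D(x) → +∞ as x → +∞. Consequently, for every real H > 0 there exists a unique x* > 0 with g_D(x*) = H. -/
open Real Filter Topology

noncomputable def aux19nrm {D : ℕ} (k : Fin D → ℤ) : ℝ :=
  Real.sqrt (∑ i, ((k i : ℤ) : ℝ) ^ 2)

noncomputable def aux19f {D : ℕ} (x : ℝ) (k : {k : Fin D → ℤ // k ≠ 0}) : ℝ :=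
  Real.sqrt (∑ i, ((k.1 i : ℤ) : ℝ) ^ 2) /
    (Real.exp (Real.sqrt (∑ i, ((k.1 i : ℤ) : ℝ) ^ 2) / x) - 1)

lemma aux19f_eq {D : ℕ} (x : ℝ) (k : {k : Fin D → ℤ // k ≠ 0}) :
    aux19f x k = aux19nrm k.1 / (Real.exp (aux19nrm k.1 / x) - 1) := rfl

lemma aux19nrm_nonneg {D : ℕ} (k : Fin D → ℤ) : 0 ≤ aux19nrm k := Real.sqrt_nonneg _

lemma aux19nrm_one_le {D : ℕ} {k : Fin D → ℤ} (hk : k ≠ 0) : 1 ≤ aux19nrm k := by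
  obtain ⟨i, hi⟩ := Function.ne_iff.mp hk
  have h1 : (1 : ℝ) ≤ ((k i : ℤ) : ℝ) ^ 2 := by
    have : (1 : ℤ) ≤ |k i| := Int.one_le_abs hi
    have h2 : (1 : ℝ) ≤ |((k i : ℤ) : ℝ)| := by
      rw [← Int.cast_abs]; exact_mod_cast this
    calc (1:ℝ) = 1 ^ 2 := by ring
    _ ≤ |((k i : ℤ) : ℝ)| ^ 2 := by
        apply pow_le_pow_left₀ (by norm_num) h2 2
    _ = ((k i : ℤ) : ℝ) ^ 2 := sq_abs _
  have hsum : (1 : ℝ) ≤ ∑ j, ((k j : ℤ) : ℝ) ^ 2 :=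
    h1.trans (Finset.single_le_sum (f := fun j => ((k j : ℤ) : ℝ) ^ 2)
      (fun j _ => sq_nonneg _) (Finset.mem_univ i))
  calc (1 : ℝ) = Real.sqrt 1 := Real.sqrt_one.symm
  _ ≤ aux19nrm k := Real.sqrt_le_sqrt hsum

lemma aux19nrm_pos {D : ℕ} {k : Fin D → ℤ} (hk : k ≠ 0) : 0 < aux19nrm k :=
  lt_of_lt_of_le one_pos (aux19nrm_one_le hk)

lemma aux19_comp_le {D : ℕ} (k : Fin D → ℤ) (j : Fin D) :
    |((k j : ℤ) : ℝ)| ≤ aux19nrm k := by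
  rw [← Real.sqrt_sq_eq_abs]
  exact Real.sqrt_le_sqrt (Finset.single_le_sum (f := fun i => ((k i : ℤ) : ℝ) ^ 2)
    (fun i _ => sq_nonneg _) (Finset.mem_univ j))

lemma aux19_sum_le {D : ℕ} (k : Fin D → ℤ) :
    ∑ j, |((k j : ℤ) : ℝ)| ≤ D * aux19nrm k := by
  calc ∑ j, |((k j : ℤ) : ℝ)| ≤ ∑ _j : Fin D, aux19nrm k :=
        Finset.sum_le_sum (fun j _ => aux19_comp_le k j)
  _ = D * aux19nrm k := by simp [Finset.sum_const, Finset.card_univ, nsmul_eq_mul]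

lemma aux19_summable_int {r : ℝ} (h0 : 0 ≤ r) (h1 : r < 1) :
    Summable fun m : ℤ => r ^ m.natAbs := by
  apply Summable.of_nat_of_neg
  · simpa using summable_geometric_of_lt_one h0 h1
  · simpa using summable_geometric_of_lt_one h0 h1

lemma aux19_summable_pi (D : ℕ) {r : ℝ} (h0 : 0 ≤ r) (h1 : r < 1) :
    Summable fun k : Fin D → ℤ => ∏ i, r ^ (k i).natAbs := by
  induction D with
  | zero => exact Summable.of_finite
  | succ D ih =>
    have hmul := Summable.mul_of_nonneg (aux19_summable_int h0 h1) ih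
      (fun m => pow_nonneg h0 _)
      (fun k => Finset.prod_nonneg fun i _ => pow_nonneg h0 _)
    apply (Equiv.summable_iff (Fin.consEquiv (fun _ : Fin (D+1) => ℤ))).mp
    have heq : ((fun k : Fin (D+1) → ℤ => ∏ i, r ^ (k i).natAbs) ∘
        (Fin.consEquiv (fun _ : Fin (D+1) => ℤ)))
        = fun p : ℤ × (Fin D → ℤ) => r ^ p.1.natAbs * ∏ i, r ^ (p.2 i).natAbs := by
      funext p
      simp [Fin.consEquiv, Fin.prod_univ_succ]
    rw [heq]
    exact hmul

lemma aux19_term_bound {x n : ℝ} (hx : 0 < x) (hn : 1 ≤ n) :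
    n / (Real.exp (n / x) - 1) ≤ 2 * x * Real.exp (-(n / (2 * x))) := by
  have hn0 : 0 < n := lt_of_lt_of_le one_pos hn
  have h2x : 0 < 2 * x := by linarith
  have hhalf : 0 < n / (2 * x) := div_pos hn0 h2x
  have hden : n / (2 * x) * Real.exp (n / (2 * x)) ≤ Real.exp (n / x) - 1 := by
    have hsq : Real.exp (n / (2 * x)) * Real.exp (n / (2 * x)) = Real.exp (n / x) := by
      rw [← Real.exp_add]; congr 1; field_simp; ring
    have h2 : Real.exp (n / x) - 1
        = (Real.exp (n / (2 * x)) - 1) * (Real.exp (n / (2 * x)) + 1) := by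
      rw [← hsq]; ring
    rw [h2]
    have ha : n / (2 * x) ≤ Real.exp (n / (2 * x)) - 1 := by
      linarith [Real.add_one_le_exp (n / (2 * x))]
    have hb : Real.exp (n / (2 * x)) ≤ Real.exp (n / (2 * x)) + 1 := by linarith
    exact mul_le_mul ha hb (Real.exp_pos _).le (by linarith)
  have hdpos : 0 < n / (2 * x) * Real.exp (n / (2 * x)) := mul_pos hhalf (Real.exp_pos _)
  have hn' : 0 ≤ n := hn0.le
  calc n / (Real.exp (n / x) - 1) ≤ n / (n / (2 * x) * Real.exp (n / (2 * x))) := by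
        gcongr
  _ = 2 * x * Real.exp (-(n / (2 * x))) := by
        rw [Real.exp_neg]
        field_simp

lemma aux19_exp_bound {D : ℕ} {x : ℝ} (hx : 0 < x) (k : Fin D → ℤ) :
    Real.exp (-(aux19nrm k / (2 * x))) ≤ ∏ i, Real.exp (-(1 / (2 * x * D))) ^ (k i).natAbs := by
  have hrw : ∀ i ∈ Finset.univ, Real.exp (-(1 / (2 * x * D))) ^ (k i).natAbs
      = Real.exp (((k i).natAbs : ℝ) * (-(1 / (2 * x * D)))) := by
    intro i _
    rw [← Real.exp_nat_mul]
  rw [Finset.prod_congr rfl hrw, ← Real.exp_sum]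
  apply Real.exp_le_exp.mpr
  have hsum : ∑ i, ((k i).natAbs : ℝ) * (-(1 / (2 * x * D)))
      = -((∑ j, |((k j : ℤ) : ℝ)|) / (2 * x * D)) := by
    rw [← Finset.sum_mul]
    have : ∑ i, (((k i).natAbs : ℝ)) = ∑ j, |((k j : ℤ) : ℝ)| := by
      apply Finset.sum_congr rfl
      intro i _
      rw [Nat.cast_natAbs, Int.cast_abs]
    rw [this]; ring
  rw [hsum]
  rw [neg_le_neg_iff]
  rcases Nat.eq_zero_or_pos D with hD | hD
  · subst hD
    simp
    exact div_nonneg (aux19nrm_nonneg k) (by linarith)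
  have hD' : (0 : ℝ) < D := by exact_mod_cast hD
  rw [div_le_div_iff₀ (by positivity) (by positivity)]
  calc (∑ j, |((k j : ℤ) : ℝ)|) * (2 * x) ≤ (D * aux19nrm k) * (2 * x) :=
        mul_le_mul_of_nonneg_right (aux19_sum_le k) (by positivity)
  _ = aux19nrm k * (2 * x * D) := by ring

lemma aux19f_nonneg {D : ℕ} {x : ℝ} (hx : 0 ≤ x) (k : {k : Fin D → ℤ // k ≠ 0}) :
    0 ≤ aux19f x k := by
  rw [aux19f_eq]
  apply div_nonneg (aux19nrm_nonneg _)
  have : (0:ℝ) ≤ aux19nrm k.1 / x := div_nonneg (aux19nrm_nonneg _) hx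
  linarith [Real.one_le_exp this]

lemma aux19_summable {D : ℕ} {x : ℝ} (hx : 0 < x) :
    Summable fun k : {k : Fin D → ℤ // k ≠ 0} => aux19f x k := by
  rcases Nat.eq_zero_or_pos D with hD | hD
  · subst hD
    apply Summable.of_finite
  have hD' : (0 : ℝ) < D := by exact_mod_cast hD
  set r := Real.exp (-(1 / (2 * x * D))) with hr
  have hr0 : 0 ≤ r := (Real.exp_pos _).le
  have hr1 : r < 1 := by
    rw [hr, Real.exp_lt_one_iff]
    have : (0:ℝ) < 1 / (2 * x * D) := by positivity
    linarith
  have hsum : Summable fun k : Fin D → ℤ => 2 * x * ∏ i, r ^ (k i).natAbs :=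
    (aux19_summable_pi D hr0 hr1).mul_left _
  have hsub : Summable fun k : {k : Fin D → ℤ // k ≠ 0} =>
      2 * x * ∏ i, r ^ (k.1 i).natAbs :=
    hsum.comp_injective Subtype.val_injective
  apply Summable.of_nonneg_of_le (fun k => aux19f_nonneg hx.le k) _ hsub
  intro k
  rw [aux19f_eq]
  calc aux19nrm k.1 / (Real.exp (aux19nrm k.1 / x) - 1)
      ≤ 2 * x * Real.exp (-(aux19nrm k.1 / (2 * x))) :=
        aux19_term_bound hx (aux19nrm_one_le k.2)
  _ ≤ 2 * x * ∏ i, r ^ (k.1 i).natAbs := by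
        apply mul_le_mul_of_nonneg_left (aux19_exp_bound hx k.1) (by linarith)

lemma aux19_term_mono {n x y : ℝ} (hn : 0 < n) (hx : 0 < x) (hxy : x ≤ y) :
    n / (Real.exp (n / x) - 1) ≤ n / (Real.exp (n / y) - 1) := by
  have hy : 0 < y := lt_of_lt_of_le hx hxy
  have h1 : 0 < Real.exp (n / y) - 1 := by
    nlinarith [Real.add_one_le_exp (n / y), div_pos hn hy]
  have h2 : Real.exp (n / y) - 1 ≤ Real.exp (n / x) - 1 := by
    have h3 : n / y ≤ n / x := by
      rw [div_le_div_iff₀ hy hx]; nlinarith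
    linarith [Real.exp_le_exp.mpr h3]
  have hn' : 0 ≤ n := hn.le
  gcongr

lemma aux19_term_strict {n x y : ℝ} (hn : 0 < n) (hx : 0 < x) (hxy : x < y) :
    n / (Real.exp (n / x) - 1) < n / (Real.exp (n / y) - 1) := by
  have hy : 0 < y := lt_trans hx hxy
  have h1 : 0 < Real.exp (n / y) - 1 := by
    have h2 : 0 < n / y := div_pos hn hy
    nlinarith [Real.add_one_le_exp (n / y)]
  apply div_lt_div_of_pos_left hn h1
  have : n / y < n / x := div_lt_div_of_pos_left hn hx hxy
  have := Real.exp_lt_exp.mpr this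
  linarith

lemma aux19_small {n x : ℝ} (hn : 1 ≤ n) (hx0 : 0 < x) (hx1 : x ≤ 1) :
    n / (Real.exp (n / x) - 1) ≤ Real.exp (1 - 1 / x) * (n / (Real.exp n - 1)) := by
  have hn0 : 0 < n := lt_of_lt_of_le one_pos hn
  have hb : 0 ≤ 1 / x - 1 := by
    have : 1 ≤ 1 / x := by rw [le_div_iff₀ hx0]; linarith
    linarith
  have hA1 : 1 ≤ Real.exp (1 / x - 1) := Real.one_le_exp hb
  have hEn : 1 < Real.exp n := by
    have := Real.add_one_le_exp n
    linarith
  have key : Real.exp (1 / x - 1) * (Real.exp n - 1) ≤ Real.exp (n / x) - 1 := by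
    have h1 : (1 / x - 1) + n ≤ n / x := by
      have e : n / x = n * (1 / x) := by ring
      nlinarith
    have h2 : Real.exp ((1 / x - 1) + n) ≤ Real.exp (n / x) := Real.exp_le_exp.mpr h1
    rw [Real.exp_add] at h2
    nlinarith
  have hpos : 0 < Real.exp (1 / x - 1) * (Real.exp n - 1) := by nlinarith
  have hn' : 0 ≤ n := hn0.le
  calc n / (Real.exp (n / x) - 1) ≤ n / (Real.exp (1 / x - 1) * (Real.exp n - 1)) := by
        gcongr
  _ = Real.exp (1 - 1 / x) * (n / (Real.exp n - 1)) := by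
        rw [show (1 - 1 / x) = -(1 / x - 1) by ring, Real.exp_neg]
        have hE1 : Real.exp n - 1 ≠ 0 := by linarith
        have hA0 : Real.exp (1 / x - 1) ≠ 0 := Real.exp_ne_zero _
        field_simp

/-- For `x > 0` let `g_D(x) = ∑_{k∈ℤ^D, k≠0} |k|/(e^{|k|/x} - 1)`.  Then `g_D(x)` is finite
for each `x > 0`, `g_D` is strictly increasing on `(0,∞)`, `g_D(x) → 0` as `x → 0⁺`,
`g_D(x) → ∞` as `x → ∞`; consequently for every `H > 0` there is a unique `x* > 0` with
`g_D(x*) = H`. -/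
theorem stmt_19 (D : ℕ) (hD : 0 < D) (g : ℝ → ℝ)
    (hg : ∀ x : ℝ, g x = ∑' k : {k : Fin D → ℤ // k ≠ 0},
      Real.sqrt (∑ i, ((k.1 i : ℤ) : ℝ) ^ 2) /
        (Real.exp (Real.sqrt (∑ i, ((k.1 i : ℤ) : ℝ) ^ 2) / x) - 1)) :
    (∀ x : ℝ, 0 < x →
      Summable fun k : {k : Fin D → ℤ // k ≠ 0} =>
        Real.sqrt (∑ i, ((k.1 i : ℤ) : ℝ) ^ 2) /
          (Real.exp (Real.sqrt (∑ i, ((k.1 i : ℤ) : ℝ) ^ 2) / x) - 1)) ∧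
    StrictMonoOn g (Set.Ioi 0) ∧
    Tendsto g (𝓝[>] (0 : ℝ)) (𝓝 0) ∧
    Tendsto g atTop atTop ∧
    ∀ H : ℝ, 0 < H → ∃! x : ℝ, 0 < x ∧ g x = H := by
  have hsummable : ∀ x : ℝ, 0 < x →
      Summable fun k : {k : Fin D → ℤ // k ≠ 0} => aux19f x k := fun x hx => aux19_summable hx
  have hne : (Pi.single (⟨0, hD⟩ : Fin D) (1 : ℤ) : Fin D → ℤ) ≠ 0 := by
    intro h
    have := congrFun h ⟨0, hD⟩
    simp at this
  set k0 : {k : Fin D → ℤ // k ≠ 0} := ⟨Pi.single ⟨0, hD⟩ 1, hne⟩ with hk0def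
  have hk0n : aux19nrm k0.1 = 1 := by
    have hsum1 : ∑ i, (((Pi.single (⟨0, hD⟩ : Fin D) (1 : ℤ) : Fin D → ℤ) i : ℝ)) ^ 2 = 1 := by
      rw [Finset.sum_eq_single (⟨0, hD⟩ : Fin D)]
      · simp
      · intro b _ hb
        simp [Pi.single_apply, hb]
      · simp
    show Real.sqrt (∑ i, (((Pi.single (⟨0, hD⟩ : Fin D) (1 : ℤ) : Fin D → ℤ) i : ℝ)) ^ 2) = 1
    rw [hsum1, Real.sqrt_one]
  have hnonneg : ∀ x : ℝ, 0 < x → 0 ≤ g x := by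
    intro x hx
    rw [hg x]
    exact tsum_nonneg (fun k => aux19f_nonneg hx.le k)
  have hmono : StrictMonoOn g (Set.Ioi 0) := by
    intro x hx y hy hxy
    rw [hg x, hg y]
    exact Summable.tsum_lt_tsum (f := fun k : {k : Fin D → ℤ // k ≠ 0} => aux19f x k)
      (g := fun k : {k : Fin D → ℤ // k ≠ 0} => aux19f y k) (i := k0)
      (fun k => aux19_term_mono (aux19nrm_pos k.2) hx hxy.le)
      (aux19_term_strict (aux19nrm_pos k0.2) hx hxy)
      (hsummable x hx) (hsummable y hy)
  have hz : Tendsto g (𝓝[>] (0 : ℝ)) (𝓝 0) := by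
    have hbound : ∀ x : ℝ, 0 < x → x ≤ 1 → g x ≤ Real.exp (1 - 1 / x) * g 1 := by
      intro x hx0 hx1
      rw [hg x, hg 1, ← tsum_mul_left]
      have hs1 : Summable fun k : {k : Fin D → ℤ // k ≠ 0} =>
          Real.exp (1 - 1 / x) * (aux19nrm k.1 / (Real.exp (aux19nrm k.1 / 1) - 1)) :=
        (hsummable 1 one_pos).mul_left _
      apply Summable.tsum_le_tsum _ (hsummable x hx0) hs1
      intro k
      have h1 := aux19_small (aux19nrm_one_le k.2) hx0 hx1
      have e1 : aux19nrm k.1 / 1 = aux19nrm k.1 := div_one _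
      calc aux19f x k ≤ Real.exp (1 - 1 / x) * (aux19nrm k.1 / (Real.exp (aux19nrm k.1) - 1)) := h1
      _ = Real.exp (1 - 1 / x) * (aux19nrm k.1 / (Real.exp (aux19nrm k.1 / 1) - 1)) := by
          rw [e1]
    have h1 : Tendsto (fun x : ℝ => 1 - 1 / x) (𝓝[>] (0 : ℝ)) atBot := by
      have h2 : Tendsto (fun x : ℝ => 1 / x) (𝓝[>] (0 : ℝ)) atTop := by
        simpa [one_div] using (tendsto_inv_nhdsGT_zero (𝕜 := ℝ))
      have h2' : Tendsto (fun x : ℝ => -(1 / x)) (𝓝[>] (0 : ℝ)) atBot :=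
        tendsto_neg_atTop_atBot.comp h2
      have h2'' := tendsto_atBot_add_const_left (𝓝[>] (0 : ℝ)) 1 h2'
      simpa [sub_eq_add_neg] using h2''
    have h3 : Tendsto (fun x : ℝ => Real.exp (1 - 1 / x) * g 1) (𝓝[>] (0 : ℝ)) (𝓝 0) := by
      have h4 : Tendsto (fun x : ℝ => Real.exp (1 - 1 / x)) (𝓝[>] (0 : ℝ)) (𝓝 0) :=
        Real.tendsto_exp_atBot.comp h1
      simpa using h4.mul_const (g 1)
    have hev : Set.Ioc (0 : ℝ) 1 ∈ 𝓝[>] (0 : ℝ) :=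
      Ioc_mem_nhdsGT_of_mem ⟨le_refl 0, one_pos⟩
    apply tendsto_of_tendsto_of_tendsto_of_le_of_le' tendsto_const_nhds h3
    · filter_upwards [hev] with x hx
      exact hnonneg x hx.1
    · filter_upwards [hev] with x hx
      exact hbound x hx.1 hx.2
  have htop : Tendsto g atTop atTop := by
    have hphi : Tendsto (fun x : ℝ => 1 / (Real.exp (1 / x) - 1)) atTop atTop := by
      have hden : Tendsto (fun x : ℝ => Real.exp (1 / x) - 1) atTop (𝓝[>] (0 : ℝ)) := by
        rw [tendsto_nhdsWithin_iff]
        constructor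
        · have h1 : Tendsto (fun x : ℝ => 1 / x) atTop (𝓝 0) := by
            simpa [one_div] using (tendsto_inv_atTop_zero (𝕜 := ℝ))
          have h2 : Tendsto (fun x : ℝ => Real.exp (1 / x)) atTop (𝓝 1) := by
            have := (Real.continuous_exp.tendsto 0).comp h1
            simpa [Function.comp_def] using this
          have h5 : Tendsto (fun x : ℝ => Real.exp (1 / x) - 1) atTop (𝓝 (1 - 1)) :=
            h2.sub tendsto_const_nhds
          simpa using h5
        · filter_upwards [eventually_gt_atTop (0 : ℝ)] with x hx
          have hpos : 0 < 1 / x := by positivity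
          have := Real.add_one_le_exp (1 / x)
          simp only [Set.mem_Ioi]
          nlinarith
      simpa [one_div, Function.comp_def] using (tendsto_inv_nhdsGT_zero (𝕜 := ℝ)).comp hden
    apply tendsto_atTop_mono' atTop _ hphi
    filter_upwards [eventually_gt_atTop (0 : ℝ)] with x hx
    rw [hg x]
    have hle := Summable.le_tsum (hsummable x hx) k0 (fun j _ => aux19f_nonneg hx.le j)
    rw [aux19f_eq, hk0n] at hle
    exact hle
  refine ⟨fun x hx => hsummable x hx, hmono, hz, htop, ?_⟩
  intro H hH
  obtain ⟨a, haH, ha0⟩ := ((hz.eventually_lt_const hH).and eventually_mem_nhdsWithin).exists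
  have ha0' : (0 : ℝ) < a := ha0
  obtain ⟨b, hbH, hab⟩ := ((htop.eventually_gt_atTop H).and (eventually_gt_atTop a)).exists
  have hb0 : (0 : ℝ) < b := lt_trans ha0' hab
  have hcont : ContinuousOn g (Set.Icc a b) := by
    apply ContinuousOn.congr (f := fun x => ∑' k : {k : Fin D → ℤ // k ≠ 0}, aux19f x k)
    · apply continuousOn_tsum (u := fun k : {k : Fin D → ℤ // k ≠ 0} => aux19f b k)
      · intro k
        show ContinuousOn (fun x => aux19nrm k.1 / (Real.exp (aux19nrm k.1 / x) - 1)) (Set.Icc a b)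
        apply ContinuousOn.div continuousOn_const
        · apply ContinuousOn.sub _ continuousOn_const
          apply Real.continuous_exp.comp_continuousOn
          apply ContinuousOn.div continuousOn_const continuousOn_id
          intro x hx
          exact ne_of_gt (lt_of_lt_of_le ha0' hx.1)
        · intro x hx
          have hx0 : 0 < x := lt_of_lt_of_le ha0' hx.1
          have hpos : 0 < aux19nrm k.1 / x := div_pos (aux19nrm_pos k.2) hx0
          have h5 := Real.add_one_le_exp (aux19nrm k.1 / x)
          intro hzero
          nlinarith
      · exact hsummable b hb0
      · intro k x hx
        have hx0 : 0 < x := lt_of_lt_of_le ha0' hx.1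
        rw [Real.norm_eq_abs, abs_of_nonneg (aux19f_nonneg hx0.le k)]
        exact aux19_term_mono (aux19nrm_pos k.2) hx0 hx.2
    · intro x _
      rw [hg x]
      rfl
  have hmem : H ∈ Set.Icc (g a) (g b) := ⟨haH.le, hbH.le⟩
  obtain ⟨c, hc, hgc⟩ := intermediate_value_Icc hab.le hcont hmem
  have hc0 : 0 < c := lt_of_lt_of_le ha0' hc.1
  refine ⟨c, ⟨hc0, hgc⟩, ?_⟩
  rintro y ⟨hy0, hyH⟩
  exact hmono.injOn (Set.mem_Ioi.mpr hy0) (Set.mem_Ioi.mpr hc0) (by rw [hyH, hgc])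
end
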